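/- Let f : {0,1}ⁿ → ℝ satisfy condition (3.1) with nonnegative nondecreasing function ϕ and constant B, where B = max over x ∈ {0,1}ⁿ and 1 ≤ i ≤ n of |f(x) − f(x^{(i)})|. Then for all 0 < δ < γ ≤ 1/2, Q_{1−δ} − Q_{1−γ} ≤ sqrt( (72/5)·ϕ(Q_{1−δ} + B)·γ / ( δ · log( e²/(2γ) ) ) ); in particular, setting a_k = Q_{1−2^{−k}}, for every positive integer k one has a_{k+1} − a_k ≤ 4·sqrt( ϕ(a_{k+1} + B) / k ). -/

import Mathlib

open scoped Classical
open Finset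

/-- Probability of an event under the uniform distribution on `{0,1}ⁿ`. -/
noncomputable def prb {n : ℕ} (P : (Fin n → Fin 2) → Prop) : ℝ :=
  ((Finset.univ.filter P).card : ℝ) / 2 ^ n

/-- `x^{(i)}`: flip the `i`-th bit of `x`. -/
noncomputable def flipBit {n : ℕ} (x : Fin n → Fin 2) (i : Fin n) : Fin n → Fin 2 :=
  Function.update x i (x i + 1)

/-- The `α`-quantile `Q_α = inf { z : P{f(X) ≤ z} ≥ α }`. -/
noncomputable def quant {n : ℕ} (f : (Fin n → Fin 2) → ℝ) (α : ℝ) : ℝ :=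
  sInf {z : ℝ | α ≤ prb fun x => f x ≤ z}

/-- Expectation of `f(X)` for `X` uniform on `{0,1}ⁿ`. -/
noncomputable def expecb {n : ℕ} (f : (Fin n → Fin 2) → ℝ) : ℝ :=
  (∑ x, f x) / 2 ^ n

/-- Variance of `f(X)` for `X` uniform on `{0,1}ⁿ`. -/
noncomputable def varb {n : ℕ} (f : (Fin n → Fin 2) → ℝ) : ℝ :=
  expecb fun x => (f x - expecb f) ^ 2


/-!
Write `a = Q_{1-γ}`, `b = Q_{1-δ}` and let `G = min (max f a) b - a` be the cutoff of `f`
between the two quantiles. Since `G²` vanishes off `{f > a}`, a set of probability at most `γ`,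
its entropy is at least `E[G²] log (1/γ) ≥ δ (b - a)² log (1/γ)`. On the other hand the
two-point inequality `Ent(u², w²) ≤ (u - w)²` tensorizes to
`Ent(G²) ≤ E ∑ᵢ (G - G ∘ flipᵢ)² = 2 E ∑ᵢ (G - G ∘ flipᵢ)₊²`, and because `G` is a monotone
1-Lipschitz function of `f` that is constant above `b`, the last sum is at most `φ(b + B)` on
`{f > a}` and vanishes elsewhere. Hence `δ (b - a)² log (1/γ) ≤ 2 γ φ(b + B)`, and both claims
follow by arithmetic, using `log (e² / (2γ)) ≤ (36/5) log (1/γ)` for `γ ≤ 1/2`.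
-/

open Real

lemma mul_log_le_mul_log_add_sub {x y : ℝ} (hx : 0 ≤ x) (hy : 0 < y) :
    x * log y ≤ x * log x + (y - x) := by
  rcases hx.eq_or_lt with rfl | hx
  · simpa using hy.le
  have := mul_le_mul_of_nonneg_left (self_sub_one_le_mul_log (div_nonneg hx.le hy.le)) hy.le
  rw [log_div hx.ne' hy.ne'] at this
  field_simp at this
  linarith

lemma mul_log_le_mul_log_add_mul_sub_div {x y : ℝ} (hx : 0 ≤ x) (hy : 0 < y) :
    x * log x ≤ x * log y + x * (x - y) / y := by
  rcases hx.eq_or_lt with rfl | hx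
  · simp
  have := mul_le_mul_of_nonneg_left (log_le_sub_one_of_pos (div_pos hx hy)) hx.le
  rw [log_div hx.ne' hy.ne'] at this
  have e : x * (x / y - 1) = x * (x - y) / y := by field_simp
  linarith

-- `entb` of the function on `{0,1}` with values `u` and `w`.
noncomputable def twoPointEnt (u w : ℝ) : ℝ :=
  (u * log u + w * log w) / 2 - (u + w) / 2 * log ((u + w) / 2)

lemma twoPointEnt_comm (u w : ℝ) : twoPointEnt u w = twoPointEnt w u := by
  simp only [twoPointEnt, add_comm]

lemma twoPointEnt_zero_left (w : ℝ) : twoPointEnt 0 w = log 2 / 2 * w := by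
  rcases eq_or_ne w 0 with rfl | hw
  · simp [twoPointEnt]
  simp only [twoPointEnt, zero_add, log_div hw two_ne_zero]
  ring

-- The variational formula for `twoPointEnt`; equality holds at `c₁ = 2u/(u+w)`, `c₂ = 2w/(u+w)`.
lemma mul_log_add_mul_log_le_twoPointEnt {u w c₁ c₂ : ℝ} (hu : 0 ≤ u) (hw : 0 ≤ w)
    (hc₁ : 0 < c₁) (hc₂ : 0 < c₂) (hc : c₁ + c₂ = 2) :
    (u * log c₁ + w * log c₂) / 2 ≤ twoPointEnt u w := by
  set m := (u + w) / 2 with hm_def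
  rcases (show 0 ≤ m by positivity).eq_or_lt with hm | hm
  · obtain ⟨rfl, rfl⟩ : u = 0 ∧ w = 0 := ⟨by linarith, by linarith⟩
    simp [twoPointEnt]
  have h₁ := mul_log_le_mul_log_add_sub hu (mul_pos hc₁ hm)
  have h₂ := mul_log_le_mul_log_add_sub hw (mul_pos hc₂ hm)
  rw [log_mul hc₁.ne' hm.ne'] at h₁
  rw [log_mul hc₂.ne' hm.ne'] at h₂
  have hlog : (u + w) * log m = 2 * m * log m := by rw [hm_def]; ring
  have hlin : c₁ * m + c₂ * m = u + w := by rw [← add_mul, hc, hm_def]; ring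
  simp only [twoPointEnt, ← hm_def]
  linarith

lemma twoPointEnt_eq_mul_log_add_mul_log {u w : ℝ} (hu : 0 < u) (hw : 0 < w) :
    twoPointEnt u w = (u * log (u / ((u + w) / 2)) + w * log (w / ((u + w) / 2))) / 2 := by
  have hm : (u + w) / 2 ≠ 0 := by positivity
  rw [twoPointEnt, log_div hu.ne' hm, log_div hw.ne' hm]
  ring

-- Entropy is dominated by the `χ²`-divergence, `2 twoPointEnt (u²) (w²) ≤ (u² - w²)² / (u² + w²)`,
-- and `(u + w)² ≤ 2 (u² + w²)`.
lemma twoPointEnt_sq_le (u w : ℝ) : twoPointEnt (u ^ 2) (w ^ 2) ≤ (u - w) ^ 2 := by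
  set m := (u ^ 2 + w ^ 2) / 2 with hm_def
  rcases (show 0 ≤ m by positivity).eq_or_lt with hm | hm
  · obtain ⟨rfl, rfl⟩ : u = 0 ∧ w = 0 :=
      ⟨by nlinarith [sq_nonneg w, sq_nonneg u], by nlinarith [sq_nonneg u, sq_nonneg w]⟩
    simp [twoPointEnt]
  have h₁ := mul_log_le_mul_log_add_mul_sub_div (sq_nonneg u) hm
  have h₂ := mul_log_le_mul_log_add_mul_sub_div (sq_nonneg w) hm
  have hχ : u ^ 2 * (u ^ 2 - m) / m + w ^ 2 * (w ^ 2 - m) / m =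
      (u - w) ^ 2 * (u + w) ^ 2 / (2 * m) := by
    field_simp; ring
  have hsum : (u + w) ^ 2 ≤ 2 * (2 * m) := by rw [hm_def]; nlinarith [sq_nonneg (u - w)]
  have hdiv : (u - w) ^ 2 * (u + w) ^ 2 / (2 * m) ≤ 2 * (u - w) ^ 2 := by
    rw [div_le_iff₀ (by positivity)]
    nlinarith [mul_le_mul_of_nonneg_left hsum (sq_nonneg (u - w))]
  have hlog : (u ^ 2 + w ^ 2) * log m = 2 * m * log m := by rw [hm_def]; ring
  simp only [twoPointEnt, ← hm_def]
  linarith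

section Cube

variable {n : ℕ}

lemma expecb_add (g h : (Fin n → Fin 2) → ℝ) :
    expecb (fun x => g x + h x) = expecb g + expecb h := by
  simp only [expecb, sum_add_distrib, add_div]

lemma expecb_const_mul (c : ℝ) (h : (Fin n → Fin 2) → ℝ) :
    expecb (fun x => c * h x) = c * expecb h := by
  simp only [expecb, ← mul_sum, mul_div_assoc]

lemma expecb_sum {ι : Type*} (s : Finset ι) (h : ι → (Fin n → Fin 2) → ℝ) :
    expecb (fun x => ∑ i ∈ s, h i x) = ∑ i ∈ s, expecb (h i) := by
  simp only [expecb, sum_div]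
  exact sum_comm

lemma expecb_mono {g h : (Fin n → Fin 2) → ℝ} (hgh : ∀ x, g x ≤ h x) : expecb g ≤ expecb h :=
  div_le_div_of_nonneg_right (sum_le_sum fun x _ => hgh x) (by positivity)

lemma expecb_nonneg {h : (Fin n → Fin 2) → ℝ} (hh : ∀ x, 0 ≤ h x) : 0 ≤ expecb h :=
  div_nonneg (sum_nonneg fun x _ => hh x) (by positivity)

lemma eq_zero_of_expecb_eq_zero {h : (Fin n → Fin 2) → ℝ} (hh : ∀ x, 0 ≤ h x)
    (h0 : expecb h = 0) (x : Fin n → Fin 2) : h x = 0 := by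
  rw [expecb, div_eq_zero_iff, sum_eq_zero_iff_of_nonneg fun y _ => hh y] at h0
  exact h0.resolve_right (by positivity) x (mem_univ x)

lemma expecb_indicator (P : (Fin n → Fin 2) → Prop) [DecidablePred P] :
    expecb (fun x => if P x then (1 : ℝ) else 0) = prb P := by
  simp only [expecb, prb, sum_boole]
  congr

lemma prb_mono {P Q : (Fin n → Fin 2) → Prop} (h : ∀ x, P x → Q x) : prb P ≤ prb Q := by
  simp only [← expecb_indicator]
  refine expecb_mono fun x => ?_
  split_ifs <;> simp_all

lemma prb_add_prb_not (P : (Fin n → Fin 2) → Prop) : prb P + prb (fun x => ¬ P x) = 1 := by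
  rw [prb, prb, ← add_div, ← Nat.cast_add, card_filter_add_card_filter_not]
  simp

lemma prb_of_forall {P : (Fin n → Fin 2) → Prop} (h : ∀ x, P x) : prb P = 1 := by
  simp [prb, h]

lemma exists_of_prb_pos {P : (Fin n → Fin 2) → Prop} (h : 0 < prb P) : ∃ x, P x := by
  by_contra! hP
  simp [prb, hP] at h

lemma prb_pos {P : (Fin n → Fin 2) → Prop} {x : Fin n → Fin 2} (hx : P x) : 0 < prb P := by
  unfold prb
  have : 0 < #(univ.filter P) := card_pos.mpr ⟨x, by simp [hx]⟩
  positivity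

lemma flipBit_flipBit (x : Fin n → Fin 2) (i : Fin n) : flipBit (flipBit x i) i = x := by
  have two : (1 : Fin 2) + 1 = 0 := rfl
  simp [flipBit, add_assoc, two]

lemma expecb_comp_flipBit (i : Fin n) (h : (Fin n → Fin 2) → ℝ) :
    expecb (fun x => h (flipBit x i)) = expecb h :=
  congrArg (· / _) <|
    (Function.Involutive.toPerm (flipBit · i) (flipBit_flipBit · i)).sum_comp univ h (by simp)

lemma flipBit_cons_zero (s : Fin 2) (y : Fin n → Fin 2) :
    flipBit (Fin.cons s y : Fin (n + 1) → Fin 2) 0 = Fin.cons (s + 1) y := by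
  simp [flipBit]

lemma flipBit_cons_succ (s : Fin 2) (y : Fin n → Fin 2) (i : Fin n) :
    flipBit (Fin.cons s y : Fin (n + 1) → Fin 2) i.succ = Fin.cons s (flipBit y i) := by
  simp [flipBit, Fin.cons_update]

lemma expecb_succ (h : (Fin (n + 1) → Fin 2) → ℝ) :
    expecb h = (expecb (fun y => h (Fin.cons 0 y)) + expecb (fun y => h (Fin.cons 1 y))) / 2 := by
  simp only [expecb, ← (Fin.consEquiv fun _ => Fin 2).sum_comp, Fintype.sum_prod_type,
    Fin.sum_univ_two, pow_succ]
  field_simp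
  rfl

end Cube

section Entropy

variable {n : ℕ}

noncomputable def entb (h : (Fin n → Fin 2) → ℝ) : ℝ :=
  expecb (fun x => h x * log (h x)) - expecb h * log (expecb h)

lemma twoPointEnt_expecb_of_expecb_eq_zero {u : (Fin n → Fin 2) → ℝ} (w : (Fin n → Fin 2) → ℝ)
    (hu : ∀ x, 0 ≤ u x) (h0 : expecb u = 0) :
    twoPointEnt (expecb u) (expecb w) = expecb (fun x => twoPointEnt (u x) (w x)) := by
  simp only [h0, eq_zero_of_expecb_eq_zero hu h0, twoPointEnt_zero_left, expecb_const_mul]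

-- Joint convexity of `twoPointEnt`: evaluate its variational formula at the averages' optimum.
lemma twoPointEnt_expecb_le {u w : (Fin n → Fin 2) → ℝ} (hu : ∀ x, 0 ≤ u x) (hw : ∀ x, 0 ≤ w x) :
    twoPointEnt (expecb u) (expecb w) ≤ expecb (fun x => twoPointEnt (u x) (w x)) := by
  rcases (expecb_nonneg hu).eq_or_lt with hA | hA
  · exact (twoPointEnt_expecb_of_expecb_eq_zero w hu hA.symm).le
  rcases (expecb_nonneg hw).eq_or_lt with hB | hB
  · simpa only [twoPointEnt_comm] using (twoPointEnt_expecb_of_expecb_eq_zero u hw hB.symm).le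
  set m := (expecb u + expecb w) / 2
  have hm : 0 < m := by positivity
  have hdual : ∀ x, (u x * log (expecb u / m) + w x * log (expecb w / m)) / 2 ≤
      twoPointEnt (u x) (w x) := fun x =>
    mul_log_add_mul_log_le_twoPointEnt (hu x) (hw x) (by positivity) (by positivity)
      (by field_simp; ring)
  calc twoPointEnt (expecb u) (expecb w)
      = (expecb u * log (expecb u / m) + expecb w * log (expecb w / m)) / 2 :=
        twoPointEnt_eq_mul_log_add_mul_log hA hB
    _ = expecb (fun x => log (expecb u / m) / 2 * u x + log (expecb w / m) / 2 * w x) := by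
        rw [expecb_add, expecb_const_mul, expecb_const_mul]; ring
    _ ≤ expecb (fun x => twoPointEnt (u x) (w x)) := expecb_mono fun x => by linarith [hdual x]

lemma entb_succ (h : (Fin (n + 1) → Fin 2) → ℝ) :
    entb h = (entb (fun y => h (Fin.cons 0 y)) + entb (fun y => h (Fin.cons 1 y))) / 2 +
      twoPointEnt (expecb fun y => h (Fin.cons 0 y)) (expecb fun y => h (Fin.cons 1 y)) := by
  simp only [entb, twoPointEnt]
  rw [expecb_succ h, expecb_succ fun x => h x * log (h x)]
  ring

lemma sum_twoPointEnt_flipBit_cons (h : (Fin (n + 1) → Fin 2) → ℝ) (s : Fin 2)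
    (y : Fin n → Fin 2) :
    ∑ i, twoPointEnt (h (Fin.cons s y)) (h (flipBit (Fin.cons s y) i)) =
      twoPointEnt (h (Fin.cons s y)) (h (Fin.cons (s + 1) y)) +
        ∑ i, twoPointEnt (h (Fin.cons s y)) (h (Fin.cons s (flipBit y i))) := by
  simp only [Fin.sum_univ_succ, flipBit_cons_zero, flipBit_cons_succ]

theorem entb_le_expecb_sum_twoPointEnt : ∀ {n : ℕ} {h : (Fin n → Fin 2) → ℝ}, (∀ x, 0 ≤ h x) →
    entb h ≤ expecb (fun x => ∑ i, twoPointEnt (h x) (h (flipBit x i)))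
  | 0, h, _ => by simp [entb, expecb]
  | n + 1, h, hh => by
    have ih₀ := entb_le_expecb_sum_twoPointEnt (h := fun y => h (Fin.cons 0 y)) fun y => hh _
    have ih₁ := entb_le_expecb_sum_twoPointEnt (h := fun y => h (Fin.cons 1 y)) fun y => hh _
    have hjensen := twoPointEnt_expecb_le (fun y => hh (Fin.cons 0 y)) fun y => hh (Fin.cons 1 y)
    rw [entb_succ, expecb_succ]
    simp only [sum_twoPointEnt_flipBit_cons, expecb_add]
    rw [show (1 : Fin 2) + 1 = 0 from rfl, zero_add]
    have hsymm : (expecb fun x => twoPointEnt (h (Fin.cons 1 x)) (h (Fin.cons 0 x))) =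
        expecb fun x => twoPointEnt (h (Fin.cons 0 x)) (h (Fin.cons 1 x)) := by
      simp only [twoPointEnt_comm (h (Fin.cons 1 _))]
    linarith

theorem entb_sq_le (g : (Fin n → Fin 2) → ℝ) :
    entb (fun x => g x ^ 2) ≤ expecb (fun x => ∑ i, (g x - g (flipBit x i)) ^ 2) :=
  (entb_le_expecb_sum_twoPointEnt fun x => sq_nonneg (g x)).trans <|
    expecb_mono fun _ => sum_le_sum fun _ _ => twoPointEnt_sq_le _ _

lemma sq_eq_max_sq_add_max_neg_sq (d : ℝ) : d ^ 2 = max d 0 ^ 2 + max (-d) 0 ^ 2 := by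
  rcases le_total d 0 with h | h <;> simp [h]

lemma expecb_sum_sq_sub_flipBit (g : (Fin n → Fin 2) → ℝ) :
    expecb (fun x => ∑ i, (g x - g (flipBit x i)) ^ 2) =
      2 * expecb (fun x => ∑ i, max (g x - g (flipBit x i)) 0 ^ 2) := by
  simp only [expecb_sum, mul_sum]
  refine sum_congr rfl fun i _ => ?_
  have hswap := expecb_comp_flipBit i fun x => max (g x - g (flipBit x i)) 0 ^ 2
  simp only [flipBit_flipBit] at hswap
  simp only [sq_eq_max_sq_add_max_neg_sq (g _ - g _), expecb_add, neg_sub, hswap]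
  ring

theorem expecb_mul_log_le_entb {h : (Fin n → Fin 2) → ℝ} (hh : ∀ x, 0 ≤ h x) {γ : ℝ}
    (hγ : 0 < γ) (hsupp : prb (fun x => h x ≠ 0) ≤ γ) :
    expecb h * log (1 / γ) ≤ entb h := by
  rcases (expecb_nonneg hh).eq_or_lt with h0 | hpos
  · simp [entb, eq_zero_of_expecb_eq_zero hh h0.symm, expecb]
  obtain ⟨x₀, hx₀⟩ : ∃ x, h x ≠ 0 := by
    by_contra! hzero
    simp [expecb, hzero] at hpos
  set p := prb fun x => h x ≠ 0
  have hp : 0 < p := prb_pos hx₀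
  set c := expecb h / p
  -- Fenchel's inequality `x log c ≤ x log x + c - x` on the support of `h`
  have hfenchel : ∀ x, (log c + 1) * h x ≤
      h x * log (h x) + c * if h x ≠ 0 then 1 else 0 := by
    intro x
    by_cases hx : h x = 0
    · simp [hx]
    have := mul_log_le_mul_log_add_sub (hh x) (show 0 < c by positivity)
    simp only [hx, ne_eq, not_false_eq_true, if_true, mul_one]
    linarith
  have hE := expecb_mono hfenchel
  rw [expecb_const_mul, expecb_add, expecb_const_mul, expecb_indicator] at hE
  have hcp : c * p = expecb h := div_mul_cancel₀ _ hp.ne'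
  have hlog : log (1 / γ) ≤ log c - log (expecb h) := by
    rw [← Real.log_div (by positivity) hpos.ne', div_div_cancel_left' hpos.ne', one_div]
    exact Real.log_le_log (by positivity) (inv_anti₀ hp hsupp)
  unfold entb
  linarith [mul_le_mul_of_nonneg_left hlog hpos.le]

end Entropy

section Quantile

lemma exists_pos_le_abs_sub_of_ne {α : Type*} [Finite α] (f : α → ℝ) (b : ℝ) :
    ∃ ε > 0, ∀ x, f x ≠ b → ε ≤ |f x - b| := by
  have hclosed : IsClosed (Set.range f \ {b}) := ((Set.finite_range f).sdiff).isClosed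
  obtain ⟨ε, hε, hball⟩ := Metric.mem_nhds_iff.mp (hclosed.isOpen_compl.mem_nhds fun h => h.2 rfl)
  refine ⟨ε, hε, fun x hx => ?_⟩
  by_contra! hlt
  exact hball (by rwa [Metric.mem_ball, Real.dist_eq]) ⟨⟨x, rfl⟩, hx⟩

variable {n : ℕ} (f : (Fin n → Fin 2) → ℝ)

lemma quant_le_of_le_prb {α z : ℝ} (hα : 0 < α) (hz : α ≤ prb fun x => f x ≤ z) :
    quant f α ≤ z := by
  refine csInf_le ?_ hz
  obtain ⟨m, hm⟩ := (Set.finite_range f).bddBelow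
  refine ⟨m, fun z hz => ?_⟩
  obtain ⟨x, hx⟩ := exists_of_prb_pos (hα.trans_le hz)
  exact (hm ⟨x, rfl⟩).trans hx

lemma le_prb_le_quant {α : ℝ} (hα₁ : α ≤ 1) :
    α ≤ prb fun x => f x ≤ quant f α := by
  obtain ⟨M, hM⟩ := (Set.finite_range f).bddAbove
  have hne : {z | α ≤ prb fun x => f x ≤ z}.Nonempty :=
    ⟨M, hα₁.trans (prb_of_forall fun x => hM ⟨x, rfl⟩).ge⟩
  obtain ⟨ε, hε, hgap⟩ := exists_pos_le_abs_sub_of_ne f (quant f α)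
  obtain ⟨z, hz, hzlt⟩ := exists_lt_of_csInf_lt hne (lt_add_of_pos_right (quant f α) hε)
  refine hz.trans (prb_mono fun x hx => ?_)
  by_contra! hgt
  have := hgap x hgt.ne'
  rw [abs_of_pos (sub_pos.mpr hgt)] at this
  linarith

lemma le_prb_quant_le {δ : ℝ} (hδ₁ : δ < 1) :
    δ ≤ prb fun x => quant f (1 - δ) ≤ f x := by
  obtain ⟨ε, hε, hgap⟩ := exists_pos_le_abs_sub_of_ne f (quant f (1 - δ))
  have hbelow : (prb fun x => f x ≤ quant f (1 - δ) - ε) < 1 - δ := by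
    by_contra! h
    linarith [quant_le_of_le_prb f (by linarith) h]
  have hlt : (prb fun x => ¬ quant f (1 - δ) ≤ f x) ≤ prb fun x => f x ≤ quant f (1 - δ) - ε :=
    prb_mono fun x hx => by
      have := hgap x (not_le.mp hx).ne
      rw [abs_of_neg (sub_neg.mpr (not_le.mp hx))] at this
      linarith
  linarith [prb_add_prb_not fun x => quant f (1 - δ) ≤ f x]

lemma quant_mono {α β : ℝ} (hα : 0 < α) (hαβ : α ≤ β) (hβ : β ≤ 1) :
    quant f α ≤ quant f β :=
  quant_le_of_le_prb f hα (hαβ.trans (le_prb_le_quant f hβ))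

end Quantile

section Cutoff

def cutoff (a b t : ℝ) : ℝ := min (max t a) b - a

variable {a b : ℝ}

lemma cutoff_nonneg (hab : a ≤ b) (t : ℝ) : 0 ≤ cutoff a b t := by
  simp only [cutoff, sub_nonneg, le_min_iff, le_max_right, hab, and_self]

lemma cutoff_of_le {t : ℝ} (hab : a ≤ b) (ht : t ≤ a) : cutoff a b t = 0 := by
  simp [cutoff, ht, hab]

lemma cutoff_of_ge {t : ℝ} (hab : a ≤ b) (ht : b ≤ t) : cutoff a b t = b - a := by
  simp [cutoff, ht, hab.trans ht]

lemma cutoff_sub_cutoff_le (s t : ℝ) : cutoff a b s - cutoff a b t ≤ max (s - t) 0 := by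
  simp only [cutoff]
  grind

end Cutoff

lemma log_exp_two_div_le {γ : ℝ} (hγ0 : 0 < γ) (hγ : γ ≤ 1 / 2) :
    log (Real.exp 2 / (2 * γ)) ≤ 36 / 5 * log (1 / γ) := by
  have hsplit : log (Real.exp 2 / (2 * γ)) = 2 - log 2 + log (1 / γ) := by
    rw [div_mul_eq_div_div_swap, Real.log_div (by positivity) two_ne_zero,
      Real.log_div (Real.exp_pos 2).ne' hγ0.ne', Real.log_exp, one_div, Real.log_inv]
    ring
  have hγ2 : log 2 ≤ log (1 / γ) :=
    Real.log_le_log two_pos (by rw [le_div_iff₀ hγ0]; linarith)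
  linarith [Real.log_two_gt_d9]

lemma le_sqrt_div_of_mul_sq_le {c t D : ℝ} (hc : 0 < c) (h : c * t ^ 2 ≤ D) : t ≤ √(D / c) :=
  (le_abs_self t).trans (Real.abs_le_sqrt (by rw [le_div_iff₀ hc]; linarith))

section Core

variable {n : ℕ} {f : (Fin n → Fin 2) → ℝ} {φ : ℝ → ℝ} {B : ℝ}

-- Above `b + B` all neighbours lie above `b`, where the cutoff is constant.
lemma sum_sq_max_cutoff_sub_le (hφ0 : ∀ u, 0 ≤ φ u) (hφmono : Monotone φ)
    (hB : ∀ x i, |f x - f (flipBit x i)| ≤ B)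
    (hcond : ∀ x, ∑ i, (max (f x - f (flipBit x i)) 0) ^ 2 ≤ φ (f x)) {a b : ℝ} (hab : a ≤ b)
    (x : Fin n → Fin 2) :
    ∑ i, max (cutoff a b (f x) - cutoff a b (f (flipBit x i))) 0 ^ 2 ≤
      φ (b + B) * if a < f x then 1 else 0 := by
  by_cases hax : a < f x
  swap
  · refine (sum_eq_zero fun i _ => ?_).le.trans (by simp [hax])
    rw [cutoff_of_le hab (not_lt.mp hax), zero_sub, max_eq_right (neg_nonpos.mpr
      (cutoff_nonneg hab _))]
    simp
  rw [if_pos hax, mul_one]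
  by_cases hxB : f x ≤ b + B
  · calc ∑ i, max (cutoff a b (f x) - cutoff a b (f (flipBit x i))) 0 ^ 2
        ≤ ∑ i, max (f x - f (flipBit x i)) 0 ^ 2 :=
          sum_le_sum fun i _ => pow_le_pow_left₀ (le_max_right _ _)
            (max_le (cutoff_sub_cutoff_le _ _) (le_max_right _ _)) 2
      _ ≤ φ (f x) := hcond x
      _ ≤ φ (b + B) := hφmono hxB
  · refine (sum_eq_zero fun i _ => ?_).le.trans (hφ0 _)
    have hBi := hB x i
    rw [cutoff_of_ge hab (by linarith [(abs_nonneg _).trans hBi]),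
      cutoff_of_ge hab (by linarith [le_abs_self (f x - f (flipBit x i))])]
    simp

theorem mul_sq_quant_sub_mul_log_le (hφ0 : ∀ u, 0 ≤ φ u) (hφmono : Monotone φ)
    (hB : ∀ x i, |f x - f (flipBit x i)| ≤ B)
    (hcond : ∀ x, ∑ i, (max (f x - f (flipBit x i)) 0) ^ 2 ≤ φ (f x))
    {δ γ : ℝ} (hδ : 0 < δ) (hδγ : δ ≤ γ) (hγ : γ < 1) :
    δ * (quant f (1 - δ) - quant f (1 - γ)) ^ 2 * log (1 / γ) ≤
      2 * γ * φ (quant f (1 - δ) + B) := by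
  set a := quant f (1 - γ)
  set b := quant f (1 - δ)
  have hab : a ≤ b := quant_mono f (by linarith) (by linarith) (by linarith)
  set G := fun x => cutoff a b (f x)
  have htail : (prb fun x => a < f x) ≤ γ := by
    have hcompl := prb_add_prb_not fun x => f x ≤ a
    simp only [not_le] at hcompl
    linarith [le_prb_le_quant f (α := 1 - γ) (by linarith)]
  have henergy : expecb (fun x => ∑ i, max (G x - G (flipBit x i)) 0 ^ 2) ≤ γ * φ (b + B) := by
    refine (expecb_mono (sum_sq_max_cutoff_sub_le hφ0 hφmono hB hcond hab)).trans ?_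
    rw [expecb_const_mul, expecb_indicator, mul_comm γ]
    exact mul_le_mul_of_nonneg_left htail (hφ0 _)
  have hmass : δ * (b - a) ^ 2 ≤ expecb fun x => G x ^ 2 := by
    have hind : ∀ x, (b - a) ^ 2 * (if b ≤ f x then 1 else 0) ≤ G x ^ 2 := fun x => by
      split_ifs with hx
      · rw [mul_one, show G x = b - a from cutoff_of_ge hab hx]
      · rw [mul_zero]; positivity
    have := expecb_mono hind
    rw [expecb_const_mul, expecb_indicator] at this
    nlinarith [le_prb_quant_le f (δ := δ) (by linarith), sq_nonneg (b - a)]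
  have hsupp : (prb fun x => G x ^ 2 ≠ 0) ≤ γ :=
    (prb_mono fun x hx => not_le.mp fun hxa => hx (by simp [G, cutoff_of_le hab hxa])).trans htail
  calc δ * (b - a) ^ 2 * log (1 / γ)
      ≤ expecb (fun x => G x ^ 2) * log (1 / γ) :=
        mul_le_mul_of_nonneg_right hmass (Real.log_nonneg (one_le_one_div (by linarith) hγ.le))
    _ ≤ entb fun x => G x ^ 2 := expecb_mul_log_le_entb (fun x => sq_nonneg _) (by linarith) hsupp
    _ ≤ expecb fun x => ∑ i, (G x - G (flipBit x i)) ^ 2 := entb_sq_le G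
    _ = 2 * expecb fun x => ∑ i, max (G x - G (flipBit x i)) 0 ^ 2 := expecb_sum_sq_sub_flipBit G
    _ ≤ 2 * γ * φ (b + B) := by linarith

theorem quant_sub_quant_le_sqrt (hφ0 : ∀ u, 0 ≤ φ u) (hφmono : Monotone φ)
    (hB : ∀ x i, |f x - f (flipBit x i)| ≤ B)
    (hcond : ∀ x, ∑ i, (max (f x - f (flipBit x i)) 0) ^ 2 ≤ φ (f x))
    {δ γ : ℝ} (hδ : 0 < δ) (hδγ : δ < γ) (hγ : γ ≤ 1 / 2) :
    quant f (1 - δ) - quant f (1 - γ) ≤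
      √(72 / 5 * φ (quant f (1 - δ) + B) * γ / (δ * log (Real.exp 2 / (2 * γ)))) := by
  have hγ0 : 0 < γ := hδ.trans hδγ
  have hL : 0 < log (Real.exp 2 / (2 * γ)) :=
    Real.log_pos ((one_lt_div (by linarith)).mpr (by linarith [Real.add_one_le_exp 2]))
  have hgap := mul_sq_quant_sub_mul_log_le hφ0 hφmono hB hcond hδ hδγ.le (by linarith)
  refine le_sqrt_div_of_mul_sq_le (mul_pos hδ hL) ?_
  nlinarith [mul_le_mul_of_nonneg_left (log_exp_two_div_le hγ0 hγ)
    (by positivity : 0 ≤ δ * (quant f (1 - δ) - quant f (1 - γ)) ^ 2)]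

theorem quant_dyadic_sub_le_sqrt (hφ0 : ∀ u, 0 ≤ φ u) (hφmono : Monotone φ)
    (hB : ∀ x i, |f x - f (flipBit x i)| ≤ B)
    (hcond : ∀ x, ∑ i, (max (f x - f (flipBit x i)) 0) ^ 2 ≤ φ (f x))
    {k : ℕ} (hk : 1 ≤ k) :
    quant f (1 - (1 / 2) ^ (k + 1)) - quant f (1 - (1 / 2) ^ k) ≤
      4 * √(φ (quant f (1 - (1 / 2) ^ (k + 1)) + B) / k) := by
  have hk0 : (0 : ℝ) < k := by exact_mod_cast hk
  have hgap := mul_sq_quant_sub_mul_log_le hφ0 hφmono hB hcond (δ := (1 / 2) ^ (k + 1))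
    (γ := (1 / 2) ^ k) (by positivity) (pow_le_pow_of_le_one (by norm_num) (by norm_num) k.le_succ)
    (pow_lt_one₀ (by norm_num) (by norm_num) (by omega))
  set t := quant f (1 - (1 / 2) ^ (k + 1)) - quant f (1 - (1 / 2) ^ k)
  set v := φ (quant f (1 - (1 / 2) ^ (k + 1)) + B)
  have hlog : log (1 / (1 / 2) ^ k) = k * log 2 := by
    rw [one_div_pow, one_div_one_div, Real.log_pow]
  rw [hlog, pow_succ] at hgap
  have hhalf : (1 / 2 : ℝ) ^ k * (t ^ 2 * k * log 2) ≤ (1 / 2) ^ k * (4 * v) := by linarith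
  have hsq := le_of_mul_le_mul_left hhalf (by positivity)
  rw [show 4 * √(v / k) = √(16 * v / k) by
    rw [mul_div_assoc, Real.sqrt_mul (by norm_num), show (16 : ℝ) = 4 ^ 2 by norm_num,
      Real.sqrt_sq (by norm_num)]]
  refine le_sqrt_div_of_mul_sq_le hk0 ?_
  have hquarter : (1 : ℝ) / 4 ≤ log 2 := by linarith [Real.log_two_gt_d9]
  nlinarith [mul_le_mul_of_nonneg_left hquarter (by positivity : (0 : ℝ) ≤ t ^ 2 * k)]

end Core

theorem stmt_9 {n : ℕ} (f : (Fin n → Fin 2) → ℝ) (φ : ℝ → ℝ)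
    (hφ0 : ∀ u, 0 ≤ φ u) (hφmono : Monotone φ)
    (B : ℝ)
    (hB : IsGreatest (Set.range fun p : (Fin n → Fin 2) × Fin n =>
      |f p.1 - f (flipBit p.1 p.2)|) B)
    (hcond : ∀ x, ∑ i, (max (f x - f (flipBit x i)) 0) ^ 2 ≤ φ (f x))
    (a : ℕ → ℝ) (ha : ∀ k, a k = quant f (1 - (1 / 2) ^ k)) :
    (∀ δ γ : ℝ, 0 < δ → δ < γ → γ ≤ 1 / 2 →
        quant f (1 - δ) - quant f (1 - γ) ≤
          Real.sqrt ((72 / 5) * φ (quant f (1 - δ) + B) * γ /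
            (δ * Real.log (Real.exp 2 / (2 * γ))))) ∧
      ∀ k : ℕ, 1 ≤ k →
        a (k + 1) - a k ≤ 4 * Real.sqrt (φ (a (k + 1) + B) / k) := by
  have hB' : ∀ x i, |f x - f (flipBit x i)| ≤ B := fun x i => hB.2 ⟨(x, i), rfl⟩
  refine ⟨fun δ γ hδ hδγ hγ => quant_sub_quant_le_sqrt hφ0 hφmono hB' hcond hδ hδγ hγ,
    fun k hk => ?_⟩
  rw [ha, ha]
  exact quant_dyadic_sub_le_sqrt hφ0 hφmono hB' hcond hk
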